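/- ≼-subsumption: for any context Γ, any term t and any unit types U, U' of the Add type system such that U ≼ U' and no free type variable of U occurs in Γ, if Γ ⊢ t : U is derivable in Add then Γ ⊢ t : U' is derivable in Add. -/

import Mathlib

set_option maxHeartbeats 1000000

/-! ## Terms of the non-deterministic call-by-value λ-calculus (de Bruijn indices) -/

inductive Tm : Type
  | var : ℕ → Tm
  | lam : Tm → Tm
  | app : Tm → Tm → Tm
  | add : Tm → Tm → Tm
  | zero : Tm
  deriving DecidableEq

namespace Tm

/-- Values: variables and abstractions. -/
inductive IsValue : Tm → Prop
  | var (n : ℕ) : IsValue (var n)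
  | lam (t : Tm) : IsValue (lam t)

/-- de Bruijn shifting: add `d` to every variable index `≥ c`. -/
def shift (d c : ℕ) : Tm → Tm
  | var n => if n < c then var n else var (n + d)
  | lam t => lam (shift d (c + 1) t)
  | app t u => app (shift d c t) (shift d c u)
  | add t u => add (shift d c t) (shift d c u)
  | zero => zero

/-- Capture-avoiding substitution of the variable `k` by `v` (removing the binder). -/
def subst (k : ℕ) (v : Tm) : Tm → Tm
  | var n => if n = k then shift k 0 v else if k < n then var (n - 1) else var n
  | lam t => lam (subst (k + 1) v t)
  | app t u => app (subst k v t) (subst k v u)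
  | add t u => add (subst k v t) (subst k v u)
  | zero => zero

/-- `ClosedUnder k t`: every free variable of `t` has index `< k`. -/
def ClosedUnder (k : ℕ) : Tm → Prop
  | var n => n < k
  | lam t => ClosedUnder (k + 1) t
  | app t u => ClosedUnder k t ∧ ClosedUnder k u
  | add t u => ClosedUnder k t ∧ ClosedUnder k u
  | zero => True

/-- Closed terms. -/
def Closed (t : Tm) : Prop := ClosedUnder 0 t

end Tm

open Tm

/-- The AC-equivalence on terms: the least congruence making `+`
associative and commutative (terms are considered modulo `Aeq`). -/
inductive Aeq : Tm → Tm → Prop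
  | refl (t : Tm) : Aeq t t
  | symm : Aeq t u → Aeq u t
  | trans : Aeq t u → Aeq u s → Aeq t s
  | comm (t u : Tm) : Aeq (.add t u) (.add u t)
  | assoc (t u s : Tm) : Aeq (.add t (.add u s)) (.add (.add t u) s)
  | lamCongr : Aeq t t' → Aeq (.lam t) (.lam t')
  | appCongr : Aeq t t' → Aeq u u' → Aeq (.app t u) (.app t' u')
  | addCongr : Aeq t t' → Aeq u u' → Aeq (.add t u) (.add t' u')

/-- One-step reduction (the five rewrite rules plus β, closed under all
contexts, and performed modulo the AC-equivalence of terms). -/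
inductive Step : Tm → Tm → Prop
  | distrRight (t u s : Tm) : Step (.app (.add t u) s) (.add (.app t s) (.app u s))
  | distrLeft (t u s : Tm) : Step (.app t (.add u s)) (.add (.app t u) (.app t s))
  | zeroApp (t : Tm) : Step (.app .zero t) .zero
  | appZero (t : Tm) : Step (.app t .zero) .zero
  | addZero (t : Tm) : Step (.add t .zero) t
  | beta (t v : Tm) : IsValue v → Step (.app (.lam t) v) (Tm.subst 0 v t)
  | appLeft : Step t t' → Step (.app t u) (.app t' u)
  | appRight : Step u u' → Step (.app t u) (.app t u')
  | addLeft : Step t t' → Step (.add t u) (.add t' u)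
  | addRight : Step u u' → Step (.add t u) (.add t u')
  | lamCongr : Step t t' → Step (.lam t) (.lam t')
  | ac : Aeq t t' → Step t' u' → Aeq u' u → Step t u

/-- Strong normalisation of a term: accessibility of the inverse reduction. -/
def SN (t : Tm) : Prop := Acc (fun a b => Step b a) t

/-- The set of strongly normalising closed terms. -/
def SNset : Set Tm := {t | Closed t ∧ SN t}

/-- Pseudo-values: abstractions and sums of pseudo-values. -/
inductive PseudoValue : Tm → Prop
  | lam (t : Tm) : PseudoValue (.lam t)
  | add : PseudoValue t → PseudoValue u → PseudoValue (.add t u)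

/-- Neutral terms: closed terms that are not pseudo-values. -/
def Neutral (t : Tm) : Prop := Closed t ∧ ¬ PseudoValue t

/-- The set of one-step reducts of `t`. -/
def Red (t : Tm) : Set Tm := {u | Step t u}

/-- The set of reducts (in any number of steps, including zero) of terms of `S`. -/
def RedStar (S : Set Tm) : Set Tm := {u | ∃ t ∈ S, Relation.ReflTransGen Step t u}

/-- The closure of a set of terms under (CR3). -/
inductive Clo (S : Set Tm) : Tm → Prop
  | base {t : Tm} : t ∈ S → Clo S t
  | step {t : Tm} : Neutral t → (∀ u, Step t u → Clo S u) → Clo S t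

/-- `clo S`: the least set containing `S` and closed under (CR3). -/
def clo (S : Set Tm) : Set Tm := {t | Clo S t}

/-- Reducibility candidates. -/
structure IsCandidate (A : Set Tm) : Prop where
  cr1 : A ⊆ SNset
  cr2 : ∀ t ∈ A, Red t ⊆ A
  cr3 : ∀ t, Neutral t → Red t ⊆ A → t ∈ A

/-- The arrow operator on sets of closed terms. -/
def CArrow (A B : Set Tm) : Set Tm := {t | Closed t ∧ ∀ u ∈ A, Tm.app t u ∈ B}

/-- The sum of two sets of (AC-classes of) terms. -/
def CSum (A B : Set Tm) : Set Tm := {s | ∃ t ∈ A, ∃ u ∈ B, Aeq s (Tm.add t u)}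

/-- The ⊞ operator on reducibility candidates. -/
def CPlus (A B : Set Tm) : Set Tm := clo (CSum A B ∪ A ∪ B)

/-! ## Types of the Add type system -/

mutual
  /-- Unit types. -/
  inductive UTy : Type
    | var : ℕ → UTy
    | arrow : UTy → Ty → UTy
    | all : UTy → UTy

  /-- Types. -/
  inductive Ty : Type
    | unit : UTy → Ty
    | add : Ty → Ty → Ty
    | zero : Ty
end

mutual
  /-- Shifting of type variables in unit types. -/
  def UTy.shift (d c : ℕ) : UTy → UTy
    | .var n => if n < c then .var n else .var (n + d)
    | .arrow U T => .arrow (UTy.shift d c U) (Ty.shift d c T)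
    | .all U => .all (UTy.shift d (c + 1) U)

  /-- Shifting of type variables in types. -/
  def Ty.shift (d c : ℕ) : Ty → Ty
    | .unit U => .unit (UTy.shift d c U)
    | .add T R => .add (Ty.shift d c T) (Ty.shift d c R)
    | .zero => .zero
end

mutual
  /-- Substitution of the (bound) type variable `k` by `V` in a unit type. -/
  def UTy.subst (k : ℕ) (V : UTy) : UTy → UTy
    | .var n => if n = k then UTy.shift k 0 V else if k < n then .var (n - 1) else .var n
    | .arrow U T => .arrow (UTy.subst k V U) (Ty.subst k V T)
    | .all U => .all (UTy.subst (k + 1) V U)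

  /-- Substitution of the (bound) type variable `k` by `V` in a type. -/
  def Ty.subst (k : ℕ) (V : UTy) : Ty → Ty
    | .unit U => .unit (UTy.subst k V U)
    | .add T R => .add (Ty.subst k V T) (Ty.subst k V R)
    | .zero => .zero
end

/-- Iterated substitution `U[V⃗/X⃗]` for a unit type under `|Vs|` quantifiers. -/
def UTy.msubst (Vs : List UTy) (U : UTy) : UTy := Vs.foldl (fun A V => UTy.subst 0 V A) U

/-- Iterated substitution `T[V⃗/X⃗]` for a type under `|Vs|` quantifiers. -/
def Ty.msubst (Vs : List UTy) (T : Ty) : Ty := Vs.foldl (fun A V => Ty.subst 0 V A) T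

mutual
  /-- Substitution of the free type variable `X` (seen at depth `c`) by `V` in a unit type. -/
  def UTy.replAux (X : ℕ) (V : UTy) (c : ℕ) : UTy → UTy
    | .var n => if n = X + c then UTy.shift c 0 V else .var n
    | .arrow U T => .arrow (UTy.replAux X V c U) (Ty.replAux X V c T)
    | .all U => .all (UTy.replAux X V (c + 1) U)

  /-- Substitution of the free type variable `X` (seen at depth `c`) by `V` in a type. -/
  def Ty.replAux (X : ℕ) (V : UTy) (c : ℕ) : Ty → Ty
    | .unit U => .unit (UTy.replAux X V c U)
    | .add T R => .add (Ty.replAux X V c T) (Ty.replAux X V c R)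
    | .zero => .zero
end

/-- Capture-avoiding substitution `U[V/X]` of a free type variable. -/
def UTy.repl (X : ℕ) (V : UTy) (U : UTy) : UTy := UTy.replAux X V 0 U

/-- Capture-avoiding substitution `T[V/X]` of a free type variable. -/
def Ty.repl (X : ℕ) (V : UTy) (T : Ty) : Ty := Ty.replAux X V 0 T

mutual
  /-- Abstraction of the free type variable `X` (at depth `c`), used to form `∀X.U`. -/
  def UTy.absAux (X c : ℕ) : UTy → UTy
    | .var n => if n = X + c then .var c else if c ≤ n then .var (n + 1) else .var n
    | .arrow U T => .arrow (UTy.absAux X c U) (Ty.absAux X c T)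
    | .all U => .all (UTy.absAux X (c + 1) U)

  /-- Abstraction of the free type variable `X` (at depth `c`) in a type. -/
  def Ty.absAux (X c : ℕ) : Ty → Ty
    | .unit U => .unit (UTy.absAux X c U)
    | .add T R => .add (Ty.absAux X c T) (Ty.absAux X c R)
    | .zero => .zero
end

/-- `∀X.U`: universal quantification of the free type variable `X` in `U`. -/
def UTy.genAll (X : ℕ) (U : UTy) : UTy := .all (UTy.absAux X 0 U)

mutual
  /-- `X` occurs free in a unit type. -/
  def UTy.Free (n : ℕ) : UTy → Prop
    | .var m => m = n
    | .arrow U T => UTy.Free n U ∨ Ty.Free n T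
    | .all U => UTy.Free (n + 1) U

  /-- `X` occurs free in a type. -/
  def Ty.Free (n : ℕ) : Ty → Prop
    | .unit U => UTy.Free n U
    | .add T R => Ty.Free n T ∨ Ty.Free n R
    | .zero => False
end

mutual
  /-- Equivalence of unit types (the least congruence making `+` on types
  associative, commutative, with neutral element `𝟘`). -/
  inductive UEq : UTy → UTy → Prop
    | refl (U : UTy) : UEq U U
    | symm : UEq U V → UEq V U
    | trans : UEq U V → UEq V W → UEq U W
    | arrow : UEq U U' → TEq T T' → UEq (.arrow U T) (.arrow U' T')
    | all : UEq U U' → UEq (.all U) (.all U')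

  /-- Equivalence of types: the least congruence such that
  `T+R ≡ R+T`, `T+(R+S) ≡ (T+R)+S` and `T+𝟘 ≡ T`. -/
  inductive TEq : Ty → Ty → Prop
    | refl (T : Ty) : TEq T T
    | symm : TEq T R → TEq R T
    | trans : TEq T R → TEq R S → TEq T S
    | unit : UEq U U' → TEq (.unit U) (.unit U')
    | addCongr : TEq T T' → TEq R R' → TEq (.add T R) (.add T' R')
    | comm (T R : Ty) : TEq (.add T R) (.add R T)
    | assoc (T R S : Ty) : TEq (.add T (.add R S)) (.add (.add T R) S)
    | zero (T : Ty) : TEq (.add T .zero) T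
end

/-- `Σ_{i} T_i`, with the empty sum being `𝟘`. -/
def sumT (Ts : List Ty) : Ty := Ts.foldl Ty.add Ty.zero

/-- `∀X₁.…∀X_k.U`. -/
def allN : ℕ → UTy → UTy
  | 0, U => U
  | k + 1, U => .all (allN k U)

/-- Lifting of type variables in a typing context (for ∀-introduction). -/
def liftCtx (Γ : List UTy) : List UTy := Γ.map (UTy.shift 1 0)

/-! ## The Add type system -/

/-- Typing judgements of the Add type system. -/
inductive Typing : List UTy → Tm → Ty → Prop
  | ax {Γ : List UTy} {n : ℕ} {U : UTy} : Γ[n]? = some U → Typing Γ (.var n) (.unit U)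
  | axZero {Γ : List UTy} : Typing Γ .zero .zero
  | equiv {Γ t T R} : Typing Γ t T → TEq T R → Typing Γ t R
  | arrI {Γ U t T} : Typing (U :: Γ) t T → Typing Γ (.lam t) (.unit (.arrow U T))
  | arrE {Γ t u} {k : ℕ} {U : UTy} {Ts : List Ty} {Vs : List (List UTy)} :
      Ts ≠ [] → Vs ≠ [] → (∀ V ∈ Vs, V.length = k) →
      Typing Γ t (sumT (Ts.map fun Ti => .unit (allN k (.arrow U Ti)))) →
      Typing Γ u (sumT (Vs.map fun Vj => .unit (UTy.msubst Vj U))) →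
      Typing Γ (.app t u)
        (sumT ((Ts.map fun Ti => Vs.map fun Vj => Ty.msubst Vj Ti).flatten))
  | addI {Γ t u T R} : Typing Γ t T → Typing Γ u R → Typing Γ (.add t u) (.add T R)
  | allE {Γ t U} (V : UTy) : Typing Γ t (.unit (.all U)) → Typing Γ t (.unit (UTy.subst 0 V U))
  | allI {Γ t U} : Typing (liftCtx Γ) t (.unit U) → Typing Γ t (.unit (.all U))

/-! ## Interpretation of types by reducibility candidates -/

/-- Extension of a valuation. -/
def consV (A : Set Tm) (ρ : ℕ → Set Tm) : ℕ → Set Tm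
  | 0 => A
  | n + 1 => ρ n

mutual
  /-- Interpretation of unit types. -/
  def interpU : UTy → (ℕ → Set Tm) → Set Tm
    | .var n, ρ => ρ n
    | .arrow U T, ρ => CArrow (interpU U ρ) (interpT T ρ)
    | .all U, ρ => {t | ∀ A : Set Tm, IsCandidate A → t ∈ interpU U (consV A ρ)}

  /-- Interpretation of types. -/
  def interpT : Ty → (ℕ → Set Tm) → Set Tm
    | .unit U, ρ => interpU U ρ
    | .add T R, ρ => CPlus (interpT T ρ) (interpT R ρ)
    | .zero, _ => clo ∅
end

/-- Lifting of a simultaneous substitution under a binder. -/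
def liftSub (σ : ℕ → Tm) : ℕ → Tm
  | 0 => .var 0
  | n + 1 => Tm.shift 1 0 (σ n)

/-- Simultaneous substitution `t_σ` of all free term variables of `t`. -/
def Tm.msubst (σ : ℕ → Tm) : Tm → Tm
  | .var n => σ n
  | .lam t => .lam (Tm.msubst (liftSub σ) t)
  | .app t u => .app (Tm.msubst σ t) (Tm.msubst σ u)
  | .add t u => .add (Tm.msubst σ t) (Tm.msubst σ u)
  | .zero => .zero

/-! ## The relations ⋖ and ≼ on types -/

/-- The relation `⋖` on unit types: `U₁ ⋖ U₂` iff either `U₂ ≡ ∀X.U₁`, or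
`U₁ ≡ ∀X.U'` and `U₂ ≡ U'[V/X]`. -/
inductive SSub : UTy → UTy → Prop
  | gen {U₁ U₂ : UTy} (X : ℕ) : UEq U₂ (UTy.genAll X U₁) → SSub U₁ U₂
  | inst {U₁ U₂ : UTy} (U' V : UTy) : UEq U₁ (.all U') → UEq U₂ (UTy.subst 0 V U') →
      SSub U₁ U₂

/-- The relation `≼`: the reflexive (with respect to `≡`) and transitive
closure of `⋖`, on types. -/
inductive TPre : Ty → Ty → Prop
  | ofEq : TEq T T' → TPre T T'
  | ofSSub {U V : UTy} : SSub U V → TPre (.unit U) (.unit V)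
  | trans : TPre T T' → TPre T' T'' → TPre T T''

/-! ## Trees and the structured type system Add_struct -/

/-- Binary trees with two kinds of leaves: `ℓ`-leaves and `𝟘`-leaves. -/
inductive ATree : Type
  | leaf : ATree
  | zleaf : ATree
  | node : ATree → ATree → ATree
  deriving DecidableEq

namespace ATree

/-- ATree composition: branch a copy of `A'` at each `ℓ`-leaf of `A`. -/
def comp : ATree → ATree → ATree
  | .leaf, A' => A'
  | .zleaf, _ => .zleaf
  | .node A B, A' => .node (comp A A') (comp B A')

/-- `LeafAt A w`: the word `w` (over `{l,r}`, here `{false,true}`) is the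
address of an `ℓ`-leaf of `A`. -/
inductive LeafAt : ATree → List Bool → Prop
  | leaf : LeafAt .leaf []
  | left {A B w} : LeafAt A w → LeafAt (.node A B) (false :: w)
  | right {A B w} : LeafAt B w → LeafAt (.node A B) (true :: w)

/-- Labelling of the `ℓ`-leaves of a tree by unit types, yielding a type. -/
def labelU : ATree → (List Bool → UTy) → Ty
  | .leaf, f => .unit (f [])
  | .zleaf, _ => .zero
  | .node A B, f => .add (labelU A fun w => f (false :: w)) (labelU B fun w => f (true :: w))

/-- Labelling of the `ℓ`-leaves of a tree by types, yielding a type. -/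
def labelT : ATree → (List Bool → Ty) → Ty
  | .leaf, f => f []
  | .zleaf, _ => .zero
  | .node A B, f => .add (labelT A fun w => f (false :: w)) (labelT B fun w => f (true :: w))

/-- Split an address of a leaf of `A ∘ A'` into the `A`-part and the `A'`-part. -/
def split : ATree → List Bool → List Bool × List Bool
  | .leaf, p => ([], p)
  | .zleaf, p => ([], p)
  | .node A _, false :: p => ((split A p).1.cons false, (split A p).2)
  | .node _ B, true :: p => ((split B p).1.cons true, (split B p).2)
  | .node _ _, [] => ([], [])

end ATree

/-- Typing derivations of the structured type system Add_struct. -/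
inductive SDeriv : List UTy → Tm → Ty → Type
  | ax (Γ : List UTy) (n : ℕ) (U : UTy) (h : Γ[n]? = some U) : SDeriv Γ (.var n) (.unit U)
  | axZero (Γ : List UTy) : SDeriv Γ .zero .zero
  | arrI {Γ U t T} (D : SDeriv (U :: Γ) t T) : SDeriv Γ (.lam t) (.unit (.arrow U T))
  | addI {Γ t u T R} (D₁ : SDeriv Γ t T) (D₂ : SDeriv Γ u R) :
      SDeriv Γ (.add t u) (.add T R)
  | allE {Γ t U} (V : UTy) (D : SDeriv Γ t (.unit (.all U))) :
      SDeriv Γ t (.unit (UTy.subst 0 V U))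
  | allI {Γ t U} (D : SDeriv (liftCtx Γ) t (.unit U)) : SDeriv Γ t (.unit (.all U))
  | arrE {Γ t u} (A A' : ATree) (k : ℕ) (U : UTy) (Tf : List Bool → Ty)
      (Vf : List Bool → List UTy)
      (hlen : ∀ v, A'.LeafAt v → (Vf v).length = k)
      (D₁ : SDeriv Γ t (A.labelU fun w => allN k (.arrow U (Tf w))))
      (D₂ : SDeriv Γ u (A'.labelU fun v => UTy.msubst (Vf v) U)) :
      SDeriv Γ (.app t u)
        ((A.comp A').labelT fun p => Ty.msubst (Vf (A.split p).2) (Tf (A.split p).1))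

/-! ## System F with pairs -/

/-- Terms of System F with pairs. -/
inductive FTm : Type
  | var : ℕ → FTm
  | lam : FTm → FTm
  | app : FTm → FTm → FTm
  | star : FTm
  | pair : FTm → FTm → FTm
  | pl : FTm → FTm
  | pr : FTm → FTm
  deriving DecidableEq

/-- Types of System F with pairs. -/
inductive FTy : Type
  | var : ℕ → FTy
  | arrow : FTy → FTy → FTy
  | all : FTy → FTy
  | one : FTy
  | prod : FTy → FTy → FTy
  deriving DecidableEq

/-- Shifting of term variables in F-terms. -/
def FTm.shift (d c : ℕ) : FTm → FTm
  | .var n => if n < c then .var n else .var (n + d)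
  | .lam t => .lam (FTm.shift d (c + 1) t)
  | .app t u => .app (FTm.shift d c t) (FTm.shift d c u)
  | .star => .star
  | .pair t u => .pair (FTm.shift d c t) (FTm.shift d c u)
  | .pl t => .pl (FTm.shift d c t)
  | .pr t => .pr (FTm.shift d c t)

/-- Substitution of the term variable `k` by `v` in an F-term. -/
def FTm.subst (k : ℕ) (v : FTm) : FTm → FTm
  | .var n => if n = k then FTm.shift k 0 v else if k < n then .var (n - 1) else .var n
  | .lam t => .lam (FTm.subst (k + 1) v t)
  | .app t u => .app (FTm.subst k v t) (FTm.subst k v u)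
  | .star => .star
  | .pair t u => .pair (FTm.subst k v t) (FTm.subst k v u)
  | .pl t => .pl (FTm.subst k v t)
  | .pr t => .pr (FTm.subst k v t)

/-- Shifting of type variables in F-types. -/
def FTy.shift (d c : ℕ) : FTy → FTy
  | .var n => if n < c then .var n else .var (n + d)
  | .arrow A B => .arrow (FTy.shift d c A) (FTy.shift d c B)
  | .all A => .all (FTy.shift d (c + 1) A)
  | .one => .one
  | .prod A B => .prod (FTy.shift d c A) (FTy.shift d c B)

/-- Substitution of the type variable `k` by `B` in an F-type. -/
def FTy.subst (k : ℕ) (B : FTy) : FTy → FTy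
  | .var n => if n = k then FTy.shift k 0 B else if k < n then .var (n - 1) else .var n
  | .arrow A A' => .arrow (FTy.subst k B A) (FTy.subst k B A')
  | .all A => .all (FTy.subst (k + 1) B A)
  | .one => .one
  | .prod A A' => .prod (FTy.subst k B A) (FTy.subst k B A')

/-- One-step reduction in System F with pairs. -/
inductive FStep : FTm → FTm → Prop
  | beta (t u : FTm) : FStep (.app (.lam t) u) (FTm.subst 0 u t)
  | plPair (t u : FTm) : FStep (.pl (.pair t u)) t
  | prPair (t u : FTm) : FStep (.pr (.pair t u)) u
  | eta (t : FTm) : FStep (.lam (.app (FTm.shift 1 0 t) (.var 0))) t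
  | sp (p : FTm) : FStep (.pair (.pl p) (.pr p)) p
  | lamCongr : FStep t t' → FStep (.lam t) (.lam t')
  | appLeft : FStep t t' → FStep (.app t u) (.app t' u)
  | appRight : FStep u u' → FStep (.app t u) (.app t u')
  | pairLeft : FStep t t' → FStep (.pair t u) (.pair t' u)
  | pairRight : FStep u u' → FStep (.pair t u) (.pair t u')
  | plCongr : FStep t t' → FStep (.pl t) (.pl t')
  | prCongr : FStep t t' → FStep (.pr t) (.pr t')

/-- Typing in System F with pairs. -/
inductive FTyping : List FTy → FTm → FTy → Prop
  | ax {Γ n A} : Γ[n]? = some A → FTyping Γ (.var n) A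
  | star {Γ} : FTyping Γ .star .one
  | lam {Γ A t B} : FTyping (A :: Γ) t B → FTyping Γ (.lam t) (.arrow A B)
  | app {Γ t u A B} : FTyping Γ t (.arrow A B) → FTyping Γ u A → FTyping Γ (.app t u) B
  | pair {Γ t u A B} : FTyping Γ t A → FTyping Γ u B → FTyping Γ (.pair t u) (.prod A B)
  | pl {Γ t A B} : FTyping Γ t (.prod A B) → FTyping Γ (.pl t) A
  | pr {Γ t A B} : FTyping Γ t (.prod A B) → FTyping Γ (.pr t) B
  | allI {Γ t A} : FTyping (Γ.map (FTy.shift 1 0)) t A → FTyping Γ t (.all A)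
  | allE {Γ t A} (B : FTy) : FTyping Γ t (.all A) → FTyping Γ t (FTy.subst 0 B A)

/-! ## The translation from Add_struct into System F with pairs -/

mutual
  /-- Translation of unit types into F-types. -/
  def transU : UTy → FTy
    | .var n => .var n
    | .arrow U T => .arrow (transU U) (transT T)
    | .all U => .all (transU U)

  /-- Translation of Add types into F-types. -/
  def transT : Ty → FTy
    | .unit U => transU U
    | .add T R => .prod (transT T) (transT R)
    | .zero => .one
end

/-- Labelling of the `ℓ`-leaves of a tree by F-terms (pairs at the nodes, `⋆`
at the `𝟘`-leaves), yielding an F-term. -/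
def ATree.labelF : ATree → (List Bool → FTm) → FTm
  | .leaf, f => f []
  | .zleaf, _ => .star
  | .node A B, f => .pair (ATree.labelF A fun w => f (false :: w))
      (ATree.labelF B fun w => f (true :: w))

/-- `π_{w̄}(t)`: the composite of projections along the mirror of the word `w`. -/
def projMirror (w : List Bool) (t : FTm) : FTm :=
  w.foldl (fun s b => if b then .pr s else .pl s) t

/-- The translation `|t|_D` of a term typed in Add_struct by a derivation `D`
into an F-term. -/
def transD : ∀ {Γ : List UTy} {t : Tm} {T : Ty}, SDeriv Γ t T → FTm
  | _, _, _, .ax _ n _ _ => .var n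
  | _, _, _, .axZero _ => .star
  | _, _, _, .arrI D => .lam (transD D)
  | _, _, _, .addI D₁ D₂ => .pair (transD D₁) (transD D₂)
  | _, _, _, .allE _ D => transD D
  | _, _, _, .allI D => transD D
  | _, _, _, .arrE A A' _ _ _ _ _ D₁ D₂ =>
      (A.comp A').labelF fun p =>
        .app (projMirror (A.split p).1 (transD D₁)) (projMirror (A.split p).2 (transD D₂))

/-! ## Structural reduction (without AC and without the rule `t+𝟎 → t`) -/

/-- One-step reduction by a rule other than `t+𝟎 → t` (and not using the
AC-equivalence, which is absent from Add_struct). -/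
inductive SStep : Tm → Tm → Prop
  | distrRight (t u s : Tm) : SStep (.app (.add t u) s) (.add (.app t s) (.app u s))
  | distrLeft (t u s : Tm) : SStep (.app t (.add u s)) (.add (.app t u) (.app t s))
  | zeroApp (t : Tm) : SStep (.app .zero t) .zero
  | appZero (t : Tm) : SStep (.app t .zero) .zero
  | beta (t v : Tm) : IsValue v → SStep (.app (.lam t) v) (Tm.subst 0 v t)
  | appLeft : SStep t t' → SStep (.app t u) (.app t' u)
  | appRight : SStep u u' → SStep (.app t u) (.app t u')
  | addLeft : SStep t t' → SStep (.add t u) (.add t' u)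
  | addRight : SStep u u' → SStep (.add t u) (.add t u')
  | lamCongr : SStep t t' → SStep (.lam t) (.lam t')

/-! ## The partial inverse translation -/

/-- Partial inverse translation on types. -/
def invTy : FTy → Option Ty
  | .var n => some (.unit (.var n))
  | .one => some .zero
  | .all A =>
    match invTy A with
    | some (.unit U) => some (.unit (.all U))
    | _ => none
  | .prod A B =>
    match invTy A, invTy B with
    | some T, some R => some (.add T R)
    | _, _ => none
  | .arrow A B =>
    match invTy A, invTy B with
    | some (.unit U), some T => some (.unit (.arrow U T))
    | _, _ => none

/-- An F-term of the shape `A[wv ↦ π_{w̄}(t) π_{v̄}(u)]` for a non-trivial tree. -/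
def IsTreeApp (s : FTm) : Prop :=
  ∃ (A A' : ATree) (t u : FTm), A.comp A' ≠ .leaf ∧ A.comp A' ≠ .zleaf ∧
    s = (A.comp A').labelF fun p =>
      .app (projMirror (A.split p).1 t) (projMirror (A.split p).2 u)

/-- The partial inverse translation on F-terms, as a relation. -/
inductive InvTm : FTm → Tm → Prop
  | var (n : ℕ) : InvTm (.var n) (.var n)
  | star : InvTm .star .zero
  | lam : InvTm t t' → InvTm (.lam t) (.lam t')
  | app : InvTm t t' → InvTm u u' → InvTm (.app t u) (.app t' u')
  | treeApp (A A' : ATree) {t u : FTm} {t' u' : Tm} :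
      A.comp A' ≠ .leaf → A.comp A' ≠ .zleaf → InvTm t t' → InvTm u u' →
      InvTm ((A.comp A').labelF fun p =>
          .app (projMirror (A.split p).1 t) (projMirror (A.split p).2 u))
        (.app t' u')
  | pair : ¬ IsTreeApp (.pair t u) → InvTm t t' → InvTm u u' →
      InvTm (.pair t u) (.add t' u')

/-! The chain `U ≼ U'` may pass through types whose free variables clash with `Γ`, so it
cannot be followed in `Γ` directly. Instead, move the free variables of `U` above those of `Γ`
by `n ↦ n + N` (harmless, since typing is stable under renamings fixing the variables of `Γ`),
follow the chain renamed by `n ↦ n + N`, along which every generalised variable is fresh for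
`Γ` so that each `⋖`-step is an instance of `∀I` or `∀E`, and finally rename back. -/

def liftR (r : ℕ → ℕ) : ℕ → ℕ
  | 0 => 0
  | n + 1 => r n + 1

theorem iterate_liftR_apply (k : ℕ) (r : ℕ → ℕ) (n : ℕ) :
    liftR^[k] r n = if n < k then n else r (n - k) + k := by
  induction k generalizing r n with
  | zero => simp
  | succ k ih =>
    rw [Function.iterate_succ_apply']
    rcases n with _ | n
    · simp [liftR]
    · rw [liftR, ih, Nat.add_sub_add_right]
      split_ifs <;> omega

theorem liftR_comp (r₁ r₂ : ℕ → ℕ) : liftR r₁ ∘ liftR r₂ = liftR (r₁ ∘ r₂) := by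
  funext n; cases n <;> rfl

theorem liftR_id : liftR id = id := by
  funext n; cases n <;> rfl

mutual
  def UTy.ren (r : ℕ → ℕ) : UTy → UTy
    | .var n => .var (r n)
    | .arrow U T => .arrow (UTy.ren r U) (Ty.ren r T)
    | .all U => .all (UTy.ren (liftR r) U)

  def Ty.ren (r : ℕ → ℕ) : Ty → Ty
    | .unit U => .unit (UTy.ren r U)
    | .add T R => .add (Ty.ren r T) (Ty.ren r R)
    | .zero => .zero
end

mutual
  theorem UTy.ren_congr : ∀ (U : UTy) {r r' : ℕ → ℕ},
      (∀ n, UTy.Free n U → r n = r' n) → U.ren r = U.ren r'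
    | .var n, _, _, h => congrArg UTy.var (h n rfl)
    | .arrow U T, _, _, h => by
      rw [UTy.ren, UTy.ren, UTy.ren_congr U fun n hn => h n (Or.inl hn),
        Ty.ren_congr T fun n hn => h n (Or.inr hn)]
    | .all U, r, r', h => by
      rw [UTy.ren, UTy.ren, UTy.ren_congr U (r := liftR r) (r' := liftR r') ?_]
      rintro (_ | n) hn
      · rfl
      · exact congrArg (· + 1) (h n hn)

  theorem Ty.ren_congr : ∀ (T : Ty) {r r' : ℕ → ℕ},
      (∀ n, Ty.Free n T → r n = r' n) → T.ren r = T.ren r'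
    | .unit U, _, _, h => congrArg Ty.unit (UTy.ren_congr U h)
    | .add T R, _, _, h => by
      rw [Ty.ren, Ty.ren, Ty.ren_congr T fun n hn => h n (Or.inl hn),
        Ty.ren_congr R fun n hn => h n (Or.inr hn)]
    | .zero, _, _, _ => rfl
end

mutual
  theorem UTy.ren_ren : ∀ (U : UTy) (r₁ r₂ : ℕ → ℕ), (U.ren r₂).ren r₁ = U.ren (r₁ ∘ r₂)
    | .var _, _, _ => rfl
    | .arrow U T, r₁, r₂ => by simp only [UTy.ren, UTy.ren_ren U, Ty.ren_ren T]
    | .all U, r₁, r₂ => by simp only [UTy.ren, UTy.ren_ren U, liftR_comp]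

  theorem Ty.ren_ren : ∀ (T : Ty) (r₁ r₂ : ℕ → ℕ), (T.ren r₂).ren r₁ = T.ren (r₁ ∘ r₂)
    | .unit U, r₁, r₂ => by simp only [Ty.ren, UTy.ren_ren U]
    | .add T R, r₁, r₂ => by simp only [Ty.ren, Ty.ren_ren T, Ty.ren_ren R]
    | .zero, _, _ => rfl
end

mutual
  theorem UTy.ren_id : ∀ U : UTy, U.ren id = U
    | .var _ => rfl
    | .arrow U T => by rw [UTy.ren, UTy.ren_id U, Ty.ren_id T]
    | .all U => by rw [UTy.ren, liftR_id, UTy.ren_id U]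

  theorem Ty.ren_id : ∀ T : Ty, T.ren id = T
    | .unit U => by rw [Ty.ren, UTy.ren_id U]
    | .add T R => by rw [Ty.ren, Ty.ren_id T, Ty.ren_id R]
    | .zero => rfl
end

theorem UTy.ren_eq_self {U : UTy} {r : ℕ → ℕ} (h : ∀ n, UTy.Free n U → r n = n) :
    U.ren r = U :=
  (U.ren_congr h).trans U.ren_id

mutual
  theorem UTy.shift_eq_ren : ∀ (U : UTy) (d c : ℕ), UTy.shift d c U = U.ren (liftR^[c] (· + d))
    | .var n, d, c => by
      simp only [UTy.shift, UTy.ren, iterate_liftR_apply]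
      split_ifs
      · rfl
      · congr 1; omega
    | .arrow U T, d, c => by simp only [UTy.shift, UTy.ren, UTy.shift_eq_ren U, Ty.shift_eq_ren T]
    | .all U, d, c => by
      simp only [UTy.shift, UTy.ren, UTy.shift_eq_ren U, Function.iterate_succ_apply']

  theorem Ty.shift_eq_ren : ∀ (T : Ty) (d c : ℕ), Ty.shift d c T = T.ren (liftR^[c] (· + d))
    | .unit U, d, c => by simp only [Ty.shift, Ty.ren, UTy.shift_eq_ren U]
    | .add T R, d, c => by simp only [Ty.shift, Ty.ren, Ty.shift_eq_ren T, Ty.shift_eq_ren R]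
    | .zero, _, _ => rfl
end

theorem UTy.ren_shift (V : UTy) (k : ℕ) (r : ℕ → ℕ) :
    (UTy.shift k 0 V).ren (liftR^[k] r) = UTy.shift k 0 (V.ren r) := by
  simp only [UTy.shift_eq_ren, Function.iterate_zero, id, UTy.ren_ren]
  congr 1
  funext n
  simp [iterate_liftR_apply]

mutual
  theorem UTy.ren_subst : ∀ (U : UTy) (k : ℕ) (r : ℕ → ℕ) (V : UTy),
      (UTy.subst k V U).ren (liftR^[k] r) = UTy.subst k (V.ren r) (U.ren (liftR^[k + 1] r))
    | .var n, k, r, V => by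
      rcases lt_trichotomy n k with h | rfl | h
      · simp [UTy.subst, UTy.ren, iterate_liftR_apply, h, h.ne, h.not_gt, Nat.lt_succ_of_lt h]
      · simp [UTy.subst, UTy.ren, iterate_liftR_apply, UTy.ren_shift]
      · have h₁ : ¬ n - 1 < k := by omega
        have h₂ : n - 1 - k = n - (k + 1) := by omega
        simp only [UTy.subst, UTy.ren, iterate_liftR_apply, h, h.ne', h.not_ge, h₁, h₂,
          Order.lt_add_one_iff, Nat.add_succ_sub_one, ↓reduceIte]
        rw [if_neg (by omega), if_pos (by omega)]
    | .arrow U T, k, r, V => by simp only [UTy.subst, UTy.ren, UTy.ren_subst U, Ty.ren_subst T]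
    | .all U, k, r, V => by
      simp only [UTy.subst, UTy.ren, ← Function.iterate_succ_apply' liftR, UTy.ren_subst U (k + 1)]

  theorem Ty.ren_subst : ∀ (T : Ty) (k : ℕ) (r : ℕ → ℕ) (V : UTy),
      (Ty.subst k V T).ren (liftR^[k] r) = Ty.subst k (V.ren r) (T.ren (liftR^[k + 1] r))
    | .unit U, k, r, V => by simp only [Ty.subst, Ty.ren, UTy.ren_subst U]
    | .add T R, k, r, V => by simp only [Ty.subst, Ty.ren, Ty.ren_subst T, Ty.ren_subst R]
    | .zero, _, _, _ => rfl
end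

theorem UTy.ren_subst_zero (U : UTy) (r : ℕ → ℕ) (V : UTy) :
    (UTy.subst 0 V U).ren r = UTy.subst 0 (V.ren r) (U.ren (liftR r)) :=
  U.ren_subst 0 r V

theorem Ty.ren_subst_zero (T : Ty) (r : ℕ → ℕ) (V : UTy) :
    (Ty.subst 0 V T).ren r = Ty.subst 0 (V.ren r) (T.ren (liftR r)) :=
  T.ren_subst 0 r V

def abstractVar (X n : ℕ) : ℕ := if n = X then 0 else n + 1

mutual
  theorem UTy.absAux_eq_ren : ∀ (U : UTy) (X c : ℕ),
      UTy.absAux X c U = U.ren (liftR^[c] (abstractVar X))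
    | .var n, X, c => by
      simp only [UTy.absAux, UTy.ren, iterate_liftR_apply, abstractVar]
      split_ifs <;> first | rfl | (congr 1; omega)
    | .arrow U T, X, c => by
      simp only [UTy.absAux, UTy.ren, UTy.absAux_eq_ren U, Ty.absAux_eq_ren T]
    | .all U, X, c => by
      simp only [UTy.absAux, UTy.ren, UTy.absAux_eq_ren U, Function.iterate_succ_apply']

  theorem Ty.absAux_eq_ren : ∀ (T : Ty) (X c : ℕ),
      Ty.absAux X c T = T.ren (liftR^[c] (abstractVar X))
    | .unit U, X, c => by simp only [Ty.absAux, Ty.ren, UTy.absAux_eq_ren U]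
    | .add T R, X, c => by simp only [Ty.absAux, Ty.ren, Ty.absAux_eq_ren T, Ty.absAux_eq_ren R]
    | .zero, _, _ => rfl
end

theorem UTy.genAll_eq_ren (X : ℕ) (U : UTy) : UTy.genAll X U = .all (U.ren (abstractVar X)) :=
  congrArg UTy.all (U.absAux_eq_ren X 0)

theorem UTy.ren_genAll {r : ℕ → ℕ} (hr : Function.Injective r) (X : ℕ) (U : UTy) :
    (UTy.genAll X U).ren r = UTy.genAll (r X) (U.ren r) := by
  simp only [UTy.genAll_eq_ren, UTy.ren, UTy.ren_ren]
  congr 2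
  funext n
  by_cases hn : n = X
  · simp [hn, abstractVar, liftR]
  · simp [hn, hr.ne hn, abstractVar, liftR]

mutual
  theorem UEq.ren {U V : UTy} : UEq U V → ∀ r, UEq (U.ren r) (V.ren r)
    | .refl _, _ => .refl _
    | .symm h, r => .symm (h.ren r)
    | .trans h₁ h₂, r => .trans (h₁.ren r) (h₂.ren r)
    | .arrow h₁ h₂, r => .arrow (h₁.ren r) (h₂.ren r)
    | .all h, r => .all (h.ren (liftR r))

  theorem TEq.ren {T R : Ty} : TEq T R → ∀ r, TEq (T.ren r) (R.ren r)
    | .refl _, _ => .refl _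
    | .symm h, r => .symm (h.ren r)
    | .trans h₁ h₂, r => .trans (h₁.ren r) (h₂.ren r)
    | .unit h, r => .unit (h.ren r)
    | .addCongr h₁ h₂, r => .addCongr (h₁.ren r) (h₂.ren r)
    | .comm _ _, _ => .comm _ _
    | .assoc _ _ _, _ => .assoc _ _ _
    | .zero _, _ => .zero _
end

mutual
  theorem UTy.exists_free_lt : ∀ U : UTy, ∃ N, ∀ n, UTy.Free n U → n < N
    | .var m => ⟨m + 1, fun n hn => by simp only [UTy.Free] at hn; omega⟩
    | .arrow U T => by
      obtain ⟨N₁, h₁⟩ := UTy.exists_free_lt U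
      obtain ⟨N₂, h₂⟩ := Ty.exists_free_lt T
      exact ⟨max N₁ N₂, fun n hn => hn.elim (fun hU => lt_max_of_lt_left (h₁ n hU))
        (fun hT => lt_max_of_lt_right (h₂ n hT))⟩
    | .all U => by
      obtain ⟨N, h⟩ := UTy.exists_free_lt U
      exact ⟨N, fun n hn => Nat.lt_of_succ_lt (h (n + 1) hn)⟩

  theorem Ty.exists_free_lt : ∀ T : Ty, ∃ N, ∀ n, Ty.Free n T → n < N
    | .unit U => UTy.exists_free_lt U
    | .add T R => by
      obtain ⟨N₁, h₁⟩ := Ty.exists_free_lt T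
      obtain ⟨N₂, h₂⟩ := Ty.exists_free_lt R
      exact ⟨max N₁ N₂, fun n hn => hn.elim (fun hT => lt_max_of_lt_left (h₁ n hT))
        (fun hR => lt_max_of_lt_right (h₂ n hR))⟩
    | .zero => ⟨0, fun _ hn => hn.elim⟩
end

theorem exists_free_lt_ctx (Γ : List UTy) : ∃ N, ∀ W ∈ Γ, ∀ n, UTy.Free n W → n < N := by
  induction Γ with
  | nil => exact ⟨0, by simp⟩
  | cons W Γ ih =>
    obtain ⟨N₁, h₁⟩ := W.exists_free_lt
    obtain ⟨N₂, h₂⟩ := ih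
    refine ⟨max N₁ N₂, ?_⟩
    rintro W' (_ | ⟨_, hW'⟩) n hn
    · exact lt_max_of_lt_left (h₁ n hn)
    · exact lt_max_of_lt_right (h₂ W' hW' n hn)

theorem Ty.ren_sumT (r : ℕ → ℕ) (Ts : List Ty) : (sumT Ts).ren r = sumT (Ts.map (Ty.ren r)) := by
  suffices ∀ A, (Ts.foldl Ty.add A).ren r = (Ts.map (Ty.ren r)).foldl Ty.add (A.ren r) from
    this .zero
  induction Ts with
  | nil => intro; rfl
  | cons T Ts ih => intro A; exact ih (A.add T)

theorem UTy.ren_allN (k : ℕ) (r : ℕ → ℕ) (U : UTy) :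
    (allN k U).ren r = allN k (U.ren (liftR^[k] r)) := by
  induction k generalizing r with
  | zero => rfl
  | succ k ih => exact congrArg UTy.all (ih (liftR r))

/-- Each `Vⱼ` of `U.msubst Vs` is substituted under the binders still to be instantiated
after it. -/
def renVec (r : ℕ → ℕ) : List UTy → List UTy
  | [] => []
  | V :: Vs => V.ren (liftR^[Vs.length] r) :: renVec r Vs

@[simp] theorem length_renVec (r : ℕ → ℕ) (Vs : List UTy) : (renVec r Vs).length = Vs.length := by
  induction Vs with
  | nil => rfl
  | cons V Vs ih => simp [renVec, ih]

theorem UTy.ren_msubst (Vs : List UTy) (U : UTy) (r : ℕ → ℕ) :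
    (UTy.msubst Vs U).ren r = UTy.msubst (renVec r Vs) (U.ren (liftR^[Vs.length] r)) := by
  induction Vs generalizing U with
  | nil => rfl
  | cons V Vs ih =>
    simp only [UTy.msubst, List.foldl_cons] at ih ⊢
    rw [ih, UTy.ren_subst_zero, List.length_cons, Function.iterate_succ_apply']
    rfl

theorem Ty.ren_msubst (Vs : List UTy) (T : Ty) (r : ℕ → ℕ) :
    (Ty.msubst Vs T).ren r = Ty.msubst (renVec r Vs) (T.ren (liftR^[Vs.length] r)) := by
  induction Vs generalizing T with
  | nil => rfl
  | cons V Vs ih =>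
    simp only [Ty.msubst, List.foldl_cons] at ih ⊢
    rw [ih, Ty.ren_subst_zero, List.length_cons, Function.iterate_succ_apply']
    rfl

theorem liftCtx_map_ren (r : ℕ → ℕ) (Γ : List UTy) :
    liftCtx (Γ.map (UTy.ren r)) = (liftCtx Γ).map (UTy.ren (liftR r)) := by
  simp only [liftCtx, List.map_map]
  congr 1
  funext W
  simp only [Function.comp_apply, UTy.shift_eq_ren, Function.iterate_zero, id, UTy.ren_ren]
  rfl

theorem Typing.ren {Γ : List UTy} {t : Tm} {T : Ty} (h : Typing Γ t T) (r : ℕ → ℕ) :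
    Typing (Γ.map (UTy.ren r)) t (T.ren r) := by
  induction h generalizing r with
  | ax hget => exact .ax (by rw [List.getElem?_map, hget]; rfl)
  | axZero => exact .axZero
  | equiv _ e ih => exact (ih r).equiv (e.ren r)
  | arrI _ ih => exact .arrI (ih r)
  | addI _ _ ih₁ ih₂ => exact .addI (ih₁ r) (ih₂ r)
  | allE V _ ih =>
    rw [Ty.ren, UTy.ren_subst_zero]
    exact .allE (V.ren r) (ih r)
  | allI _ ih =>
    refine .allI ?_
    rw [liftCtx_map_ren]
    exact ih (liftR r)
  | @arrE Γ t u k U Ts Vs hTs hVs hlen _ _ ih₁ ih₂ =>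
    have hfun : (sumT (Ts.map fun Ti => .unit (allN k (.arrow U Ti)))).ren r =
        sumT ((Ts.map (Ty.ren (liftR^[k] r))).map
          fun Ti => .unit (allN k (.arrow (U.ren (liftR^[k] r)) Ti))) := by
      simp [Ty.ren_sumT, Function.comp_def, Ty.ren, UTy.ren_allN, UTy.ren]
    have harg : (sumT (Vs.map fun Vj => .unit (UTy.msubst Vj U))).ren r =
        sumT ((Vs.map (renVec r)).map fun Vj => .unit (UTy.msubst Vj (U.ren (liftR^[k] r)))) := by
      simp only [Ty.ren_sumT, List.map_map]
      congr 1
      refine List.map_congr_left fun Vj hVj => ?_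
      simp [Ty.ren, UTy.ren_msubst, hlen Vj hVj]
    have hres : (sumT (Ts.map fun Ti => Vs.map fun Vj => Ty.msubst Vj Ti).flatten).ren r =
        sumT ((Ts.map (Ty.ren (liftR^[k] r))).map
          fun Ti => (Vs.map (renVec r)).map fun Vj => Ty.msubst Vj Ti).flatten := by
      simp only [Ty.ren_sumT, List.map_flatten, List.map_map]
      congr 2
      refine List.map_congr_left fun Ti _ => ?_
      simp only [Function.comp_apply, List.map_map]
      refine List.map_congr_left fun Vj hVj => ?_
      simp [Ty.ren_msubst, hlen Vj hVj]
    rw [hres]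
    refine .arrE (by simpa using hTs) (by simpa using hVs) ?_ (hfun ▸ ih₁ r) (harg ▸ ih₂ r)
    simpa using hlen

theorem Typing.ren_of_fix_ctx {Γ : List UTy} {t : Tm} {T : Ty} (h : Typing Γ t T) {r : ℕ → ℕ}
    (hr : ∀ W ∈ Γ, ∀ n, UTy.Free n W → r n = n) : Typing Γ t (T.ren r) := by
  have hΓ : Γ.map (UTy.ren r) = Γ :=
    (List.map_congr_left fun W hW => UTy.ren_eq_self (hr W hW)).trans (List.map_id' Γ)
  simpa only [hΓ] using h.ren r

theorem Typing.genAll {Γ : List UTy} {t : Tm} {U : UTy} {X : ℕ}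
    (hX : ∀ W ∈ Γ, ¬ UTy.Free X W) (h : Typing Γ t (.unit U)) :
    Typing Γ t (.unit (UTy.genAll X U)) := by
  have hΓ : Γ.map (UTy.ren (abstractVar X)) = liftCtx Γ := by
    refine List.map_congr_left fun W hW => ?_
    rw [UTy.shift_eq_ren]
    refine W.ren_congr fun n hn => ?_
    have : n ≠ X := fun e => hX W hW (e ▸ hn)
    simp [abstractVar, this]
  rw [UTy.genAll_eq_ren]
  exact .allI (hΓ ▸ h.ren (abstractVar X))

theorem TPre.typing_ren {T T' : Ty} (h : TPre T T') {Γ : List UTy} {t : Tm} {r : ℕ → ℕ}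
    (hr : Function.Injective r) (hΓ : ∀ n, ∀ W ∈ Γ, ¬ UTy.Free (r n) W) :
    Typing Γ t (T.ren r) → Typing Γ t (T'.ren r) := by
  induction h with
  | ofEq e => exact fun ht => ht.equiv (e.ren r)
  | trans _ _ ih₁ ih₂ => exact ih₂ ∘ ih₁
  | ofSSub hs =>
    intro ht
    cases hs with
    | gen X e =>
      refine (Typing.genAll (hΓ X) ht).equiv (.unit ?_)
      exact UTy.ren_genAll hr X _ ▸ (e.ren r).symm
    | inst U' V e₁ e₂ =>
      have := Typing.allE (V.ren r) (ht.equiv (.unit (e₁.ren r)))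
      rw [← UTy.ren_subst_zero] at this
      exact this.equiv (.unit (e₂.ren r).symm)

/-- **≼-subsumption** (Lemma 6).  For any context `Γ`, term `t` and unit types
`U`, `U'` such that `U ≼ U'` and no free type variable of `U` occurs in `Γ`,
if `Γ ⊢ t : U` then `Γ ⊢ t : U'`. -/
theorem pre_subsumption {Γ : List UTy} {t : Tm} {U U' : UTy}
    (hsub : TPre (.unit U) (.unit U'))
    (hfresh : ∀ n, UTy.Free n U → ∀ W ∈ Γ, ¬ UTy.Free n W)
    (h : Typing Γ t (.unit U)) :
    Typing Γ t (.unit U') := by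
  classical
  obtain ⟨N, hN⟩ := exists_free_lt_ctx Γ
  have hU : Typing Γ t (.unit (U.ren (· + N))) := by
    have := h.ren_of_fix_ctx (r := fun n => if UTy.Free n U then n + N else n)
      fun W hW n hn => if_neg fun hU => hfresh n hU W hW hn
    rwa [Ty.ren, U.ren_congr fun n hn => if_pos hn] at this
  have hU' : Typing Γ t (.unit (U'.ren (· + N))) :=
    hsub.typing_ren (add_left_injective N)
      (fun n W hW hn => by have := hN W hW _ hn; omega) hU
  have := hU'.ren_of_fix_ctx (r := fun n => if n < N then n else n - N)
    fun W hW n hn => if_pos (hN W hW n hn)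
  rwa [Ty.ren, UTy.ren_ren, UTy.ren_eq_self fun n _ => by simp] at this
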